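/- Let N ≥ 2, let a > 0 and c ∈ ℝ, and define w : ℝ^N → ℝ by w(x) = c + x₁ − x₁⁴ + Σ_{i=2}^{N} (a·x₁·x_i² − x_i² − 2a²·x₁²·x_i²). Then there exists ρ > 0 such that for every x with 0 < ‖x‖ ≤ ρ, the Hessian matrix D²w(x) is negative definite, i.e. vᵀ·D²w(x)·v < 0 for every nonzero v ∈ ℝ^N. -/

import Mathlib

/-!
Write `σ = a x₁`. The Hessian form of `w` at `x` in direction `v` is `-12 x₁² v₁²` plus, for each
`i ≥ 2`, a quadratic form in `(Y, t) = (a xᵢ v₁, vᵢ)` with coefficients depending on `σ` only.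
At `σ = 0` this form is `-(2Y - t)² - t²`, so for `|σ| ≤ 1/16` it stays below `-(Y²/2 + t²/4)`.
Hence for `‖x‖ ≤ 1/(16a)` the Hessian form is at most
`-v₁² (12 x₁² + (a²/2) Σ_{i≥2} xᵢ²) - (1/4) Σ_{i≥2} vᵢ²`, which is negative once `x ≠ 0` and `v ≠ 0`.
-/

open Finset

theorem PiLp.fderiv_apply {ι 𝕜 : Type*} [Fintype ι] [NontriviallyNormedField 𝕜]
    (p : ENNReal) [Fact (1 ≤ p)] {E : ι → Type*} [∀ i, NormedAddCommGroup (E i)]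
    [∀ i, NormedSpace 𝕜 (E i)] (f : PiLp p E) (i : ι) :
    fderiv 𝕜 (fun f : PiLp p E => f i) f = PiLp.proj p E i :=
  (PiLp.hasFDerivAt_apply p f i).fderiv

theorem quadratic_form_le_of_abs_le {σ Y t : ℝ} (hσ : |σ| ≤ 1 / 16) :
    -4 * Y ^ 2 + 4 * (1 - 4 * σ) * Y * t - (2 - 2 * σ + 4 * σ ^ 2) * t ^ 2 ≤
      -(Y ^ 2 / 2) - t ^ 2 / 4 := by
  obtain ⟨h₁, h₂⟩ := abs_le.1 hσ
  nlinarith [sq_nonneg (7 * Y - 4 * (1 - 4 * σ) * t), sq_nonneg t,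
    mul_nonneg (sub_nonneg.2 h₂) (sub_nonneg.2 h₁)]

variable {ι : Type*} [Fintype ι]

theorem fderiv_fderiv_apply_eq_sum (a c : ℝ) (z : ι) (s : Finset ι) (x v : EuclideanSpace ℝ ι) :
    fderiv ℝ (fun y => fderiv ℝ (fun y : EuclideanSpace ℝ ι => c + y z - y z ^ 4 +
        ∑ i ∈ s, (a * y z * y i ^ 2 - y i ^ 2 - 2 * a ^ 2 * y z ^ 2 * y i ^ 2)) y v) x v =
      -12 * x z ^ 2 * v z ^ 2 + ∑ i ∈ s, (-4 * (a * x i * v z) ^ 2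
        + 4 * (1 - 4 * (a * x z)) * (a * x i * v z) * v i
        - (2 - 2 * (a * x z) + 4 * (a * x z) ^ 2) * v i ^ 2) := by
  simp (disch := fun_prop) only [fderiv_fun_add, fderiv_fun_sub, PiLp.fderiv_apply, fderiv_fun_pow,
    Nat.add_one_sub_one, nsmul_eq_mul, Nat.cast_ofNat, fderiv_fun_sum, fderiv_fun_mul, pow_one,
    fderiv_fun_const, Pi.zero_apply, smul_zero, add_zero, add_apply,
    sub_apply, PiLp.proj_apply, smul_apply, smul_eq_mul,
    _root_.sum_apply, zero_add, zero_sub, neg_apply, neg_mul]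
  congr 1
  · ring
  · exact sum_congr rfl fun i _ => by ring

theorem sq_add_sum_erase_pos [DecidableEq ι] {x : EuclideanSpace ℝ ι} (hx : x ≠ 0) (z : ι) :
    0 < x z ^ 2 + ∑ i ∈ univ.erase z, x i ^ 2 := by
  rw [add_sum_erase _ (fun i => x i ^ 2) (mem_univ z), ← EuclideanSpace.real_norm_sq_eq]
  positivity

theorem hessian_sum_neg [DecidableEq ι] {a : ℝ} (ha : a ≠ 0) (z : ι) {x v : EuclideanSpace ℝ ι}
    (hx : x ≠ 0) (hv : v ≠ 0) (hxz : |a * x z| ≤ 1 / 16) :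
    -12 * x z ^ 2 * v z ^ 2 + ∑ i ∈ univ.erase z, (-4 * (a * x i * v z) ^ 2
        + 4 * (1 - 4 * (a * x z)) * (a * x i * v z) * v i
        - (2 - 2 * (a * x z) + 4 * (a * x z) ^ 2) * v i ^ 2) < 0 := by
  have hxpos := sq_add_sum_erase_pos hx z
  have hvpos := sq_add_sum_erase_pos hv z
  set Sx := ∑ i ∈ univ.erase z, x i ^ 2
  set Sv := ∑ i ∈ univ.erase z, v i ^ 2
  have hSx : 0 ≤ Sx := sum_nonneg fun i _ => sq_nonneg _
  have hbound := sum_le_sum fun i (_ : i ∈ univ.erase z) =>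
    quadratic_form_le_of_abs_le (Y := a * x i * v z) (t := v i) hxz
  have hsplit : ∑ i ∈ univ.erase z, (-((a * x i * v z) ^ 2 / 2) - v i ^ 2 / 4) =
      -(v z ^ 2 * (a ^ 2 / 2 * Sx)) - Sv / 4 := by
    rw [mul_sum, mul_sum, sum_div, ← sum_neg_distrib, ← sum_sub_distrib]
    exact sum_congr rfl fun i _ => by ring
  have hP : 0 < 12 * x z ^ 2 + a ^ 2 / 2 * Sx := by
    rcases eq_or_ne (x z) 0 with hxz | hxz
    · have hSx_pos : 0 < Sx := by simpa [hxz] using hxpos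
      exact add_pos_of_nonneg_of_pos (by positivity) (mul_pos (by positivity) hSx_pos)
    · exact add_pos_of_pos_of_nonneg (by positivity) (mul_nonneg (by positivity) hSx)
  calc _ ≤ -(v z ^ 2 * (12 * x z ^ 2 + a ^ 2 / 2 * Sx)) - Sv / 4 := by linarith
    _ < 0 := by
      rcases eq_or_ne (v z) 0 with hvz | hvz
      · have hSv_pos : 0 < Sv := by simpa [hvz] using hvpos
        simp only [hvz]
        linarith
      · have hSv : 0 ≤ Sv := sum_nonneg fun i _ => sq_nonneg _
        linarith [mul_pos (sq_pos_of_ne_zero hvz) hP]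

/-- For `w(x) = c + x₁ - x₁⁴ + Σ_{i=2}^N (a x₁ x_i² - x_i² - 2a² x₁² x_i²)` on `ℝ^N`
(`N ≥ 2`, `a > 0`), there is `ρ > 0` such that the Hessian of `w` is negative definite
at every `x` with `0 < ‖x‖ ≤ ρ`. -/
theorem stmt_6 (N : ℕ) (hN : 2 ≤ N) (a c : ℝ) (ha : 0 < a)
    (w : EuclideanSpace ℝ (Fin N) → ℝ)
    (hw : ∀ x : EuclideanSpace ℝ (Fin N),
      w x = c + x ⟨0, by omega⟩ - (x ⟨0, by omega⟩) ^ 4 +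
        ∑ i : Fin N, if i ≠ ⟨0, by omega⟩ then
          a * x ⟨0, by omega⟩ * (x i) ^ 2 - (x i) ^ 2
            - 2 * a ^ 2 * (x ⟨0, by omega⟩) ^ 2 * (x i) ^ 2
        else 0) :
    ∃ ρ : ℝ, 0 < ρ ∧ ∀ x : EuclideanSpace ℝ (Fin N), 0 < ‖x‖ → ‖x‖ ≤ ρ →
      ∀ v : EuclideanSpace ℝ (Fin N), v ≠ 0 →
        fderiv ℝ (fun y => fderiv ℝ w y v) x v < 0 := by
  set z : Fin N := ⟨0, by omega⟩
  have hw' : w = fun y => c + y z - y z ^ 4 +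
      ∑ i ∈ univ.erase z, (a * y z * y i ^ 2 - y i ^ 2 - 2 * a ^ 2 * y z ^ 2 * y i ^ 2) :=
    funext fun y => by rw [hw, ← filter_ne', sum_filter]
  refine ⟨1 / (16 * a), by positivity, fun x hx hxρ v hv => ?_⟩
  rw [hw', fderiv_fderiv_apply_eq_sum]
  refine hessian_sum_neg ha.ne' z (norm_pos_iff.1 hx) hv ?_
  calc |a * x z| = a * ‖x z‖ := by rw [abs_mul, abs_of_pos ha, Real.norm_eq_abs]
    _ ≤ a * (1 / (16 * a)) := mul_le_mul_of_nonneg_left ((PiLp.norm_apply_le x z).trans hxρ) ha.le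
    _ = 1 / 16 := by field_simp
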